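/- For the permutation action of C_5 on the degree-5 del Pezzo surface M̄_{0,5}, the invariant β(M̄_{0,5} ⟲ C_5) vanishes in B_2(C_5): the sum β_1 + β_2 + (β_1-β_2) + (2β_2-β_1) + (β_2-β_1) + (β_1-2β_2) + (-β_2) + (-β_1) equals 0, where β_1 = [1,1] and β_2 = [1,2]. -/

import Mathlib

open FreeAbelianGroup

/-- A multiset of characters generates the character group. -/
def Adm {A : Type} [AddCommGroup A] (s : Multiset A) : Prop :=
  AddSubgroup.closure {x | x ∈ s} = ⊤

/-- Admissible symbols: multisets of `n` characters generating `A`. -/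
def Symb (A : Type) [AddCommGroup A] (n : ℕ) : Type :=
  {s : Multiset A // Multiset.card s = n ∧ Adm s}

/-- The blow-up relations (B₂). -/
def blowupRels (A : Type) [AddCommGroup A] (n : ℕ) :
    Set (FreeAbelianGroup (Symb A n)) :=
  {x | ∃ (a b : A) (t : Multiset A)
      (h : Multiset.card (a ::ₘ b ::ₘ t) = n ∧ Adm (a ::ₘ b ::ₘ t))
      (h1 : Multiset.card (a ::ₘ (b - a) ::ₘ t) = n ∧ Adm (a ::ₘ (b - a) ::ₘ t))
      (h2 : Multiset.card ((a - b) ::ₘ b ::ₘ t) = n ∧ Adm ((a - b) ::ₘ b ::ₘ t)),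
      a ≠ b ∧
      x = of (⟨a ::ₘ b ::ₘ t, h⟩ : Symb A n) - of ⟨a ::ₘ (b - a) ::ₘ t, h1⟩
            - of ⟨(a - b) ::ₘ b ::ₘ t, h2⟩} ∪
  {x | ∃ (a : A) (t : Multiset A)
      (h : Multiset.card (a ::ₘ a ::ₘ t) = n ∧ Adm (a ::ₘ a ::ₘ t))
      (h0 : Multiset.card ((0 : A) ::ₘ a ::ₘ t) = n ∧ Adm ((0 : A) ::ₘ a ::ₘ t)),
      x = of (⟨a ::ₘ a ::ₘ t, h⟩ : Symb A n) - of ⟨(0 : A) ::ₘ a ::ₘ t, h0⟩}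

/-- The group of equivariant birational types `𝓑ₙ(G)`, for `A = G^∨`. -/
def B (A : Type) [AddCommGroup A] (n : ℕ) : Type :=
  FreeAbelianGroup (Symb A n) ⧸ AddSubgroup.closure (blowupRels A n)

instance (A : Type) [AddCommGroup A] (n : ℕ) : AddCommGroup (B A n) := by
  unfold B; infer_instance

/-- The class of a symbol in `𝓑ₙ(G)`. -/
def symb {A : Type} [AddCommGroup A] {n : ℕ} (s : Multiset A)
    (h : Multiset.card s = n ∧ Adm s) : B A n :=
  QuotientAddGroup.mk (of (⟨s, h⟩ : Symb A n))

lemma adm_of_unit {N : ℕ} [NeZero N] {s : Multiset (ZMod N)} {u : ZMod N}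
    (hu : u ∈ s) (h : IsUnit u) : Adm s := by
  rw [Adm, AddSubgroup.eq_top_iff']
  intro x
  have hu' : u ∈ AddSubgroup.closure {y | y ∈ s} := AddSubgroup.subset_closure hu
  obtain ⟨v, hv⟩ := h.exists_left_inv
  have hx : x = (x * v).val • u := by
    rw [nsmul_eq_mul, ZMod.natCast_val, ZMod.cast_id, mul_assoc, hv, mul_one]
  rw [hx]
  exact AddSubgroup.nsmul_mem _ hu' _

lemma admU {N : ℕ} [NeZero N] {s : Multiset (ZMod N)} {u v : ZMod N}
    (hu : u ∈ s) (huv : u * v = 1) : Adm s :=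
  adm_of_unit hu (IsUnit.of_mul_eq_one _ huv)

/-- The symbol `[a,b]` in `B₂(C₅)`. -/
def c5 (a b : ZMod 5) (u v : ZMod 5) (hu : u ∈ ({a, b} : Multiset (ZMod 5)))
    (huv : u * v = 1) : B (ZMod 5) 2 :=
  symb {a, b} ⟨by simp, admU hu huv⟩

/-! The blow-up relation `[a, b] = [a, b - a] + [a - b, b]` at `(0, 4)` and `(0, 3)` gives
`[1, 4] = [2, 3] = 0`. At `(1, 2)`, `(1, 3)`, `(2, 4)`, `(3, 4)` it expresses `[1, 1]`, `[3, 3]`,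
`[2, 2]`, `[4, 4]` as differences that telescope in the sum, which leaves
`[1, 2] + [1, 3] + [2, 4] + [3, 4]`; at `(1, 4)` and `(3, 2)` it gives
`[1, 3] + [2, 4] = [1, 4] = 0` and `[3, 4] + [1, 2] = [2, 3] = 0`. -/

section Blowup

variable {A : Type} [AddCommGroup A]

lemma symb_blowup {n : ℕ} {a b : A} (t : Multiset A) (hab : a ≠ b)
    (h : Multiset.card (a ::ₘ b ::ₘ t) = n ∧ Adm (a ::ₘ b ::ₘ t))
    (h1 : Multiset.card (a ::ₘ (b - a) ::ₘ t) = n ∧ Adm (a ::ₘ (b - a) ::ₘ t))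
    (h2 : Multiset.card ((a - b) ::ₘ b ::ₘ t) = n ∧ Adm ((a - b) ::ₘ b ::ₘ t)) :
    symb (a ::ₘ b ::ₘ t) h = symb (a ::ₘ (b - a) ::ₘ t) h1 + symb ((a - b) ::ₘ b ::ₘ t) h2 := by
  have hrel : of (⟨a ::ₘ b ::ₘ t, h⟩ : Symb A n) - of ⟨a ::ₘ (b - a) ::ₘ t, h1⟩
      - of ⟨(a - b) ::ₘ b ::ₘ t, h2⟩ ∈ AddSubgroup.closure (blowupRels A n) :=
    AddSubgroup.subset_closure (Or.inl ⟨a, b, t, h, h1, h2, hab, rfl⟩)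
  show (QuotientAddGroup.mk _ : B A n) = QuotientAddGroup.mk (_ + _)
  rw [QuotientAddGroup.eq]
  convert neg_mem hrel using 1
  abel

lemma AddSubgroup.closure_insert_insert_sub_left (a b : A) (s : Set A) :
    closure (insert a (insert (b - a) s)) = closure (insert a (insert b s)) := by
  apply le_antisymm <;> rw [closure_le, Set.insert_subset_iff, Set.insert_subset_iff]
  · exact ⟨subset_closure (by simp), sub_mem (subset_closure (by simp)) (subset_closure (by simp)),
      fun x hx => subset_closure (by simp [hx])⟩
  · refine ⟨subset_closure (by simp), ?_, fun x hx => subset_closure (by simp [hx])⟩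
    have hba : b - a ∈ closure (insert a (insert (b - a) s)) := subset_closure (by simp)
    have ha : a ∈ closure (insert a (insert (b - a) s)) := subset_closure (by simp)
    simpa using add_mem hba ha

lemma AddSubgroup.closure_insert_insert_sub_right (a b : A) (s : Set A) :
    closure (insert (a - b) (insert b s)) = closure (insert a (insert b s)) := by
  rw [Set.insert_comm, closure_insert_insert_sub_left, Set.insert_comm]

lemma adm_cons_cons_iff {a b : A} {t : Multiset A} :
    Adm (a ::ₘ b ::ₘ t) ↔ AddSubgroup.closure (insert a (insert b {x | x ∈ t})) = ⊤ := by
  simp only [Adm, Multiset.mem_cons]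
  rfl

lemma adm_cons_cons_sub_left_iff {a b : A} {t : Multiset A} :
    Adm (a ::ₘ (b - a) ::ₘ t) ↔ Adm (a ::ₘ b ::ₘ t) := by
  rw [adm_cons_cons_iff, adm_cons_cons_iff, AddSubgroup.closure_insert_insert_sub_left]

lemma adm_cons_cons_sub_right_iff {a b : A} {t : Multiset A} :
    Adm ((a - b) ::ₘ b ::ₘ t) ↔ Adm (a ::ₘ b ::ₘ t) := by
  rw [adm_cons_cons_iff, adm_cons_cons_iff, AddSubgroup.closure_insert_insert_sub_right]

open Classical in
/-- Set to `0` off the admissible symbols: blowing up does not change the subgroup generated, so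
the blow-up relation then holds with no admissibility hypotheses. -/
noncomputable def symbOrZero (n : ℕ) (s : Multiset A) : B A n :=
  if h : Multiset.card s = n ∧ Adm s then symb s h else 0

lemma symbOrZero_eq_symb {n : ℕ} {s : Multiset A} (h : Multiset.card s = n ∧ Adm s) :
    symbOrZero n s = symb s h :=
  dif_pos h

lemma symbOrZero_blowup {n : ℕ} {a b : A} (t : Multiset A) (hab : a ≠ b) :
    symbOrZero n (a ::ₘ b ::ₘ t) =
      symbOrZero n (a ::ₘ (b - a) ::ₘ t) + symbOrZero n ((a - b) ::ₘ b ::ₘ t) := by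
  have iff_left : Multiset.card (a ::ₘ (b - a) ::ₘ t) = n ∧ Adm (a ::ₘ (b - a) ::ₘ t) ↔
      Multiset.card (a ::ₘ b ::ₘ t) = n ∧ Adm (a ::ₘ b ::ₘ t) := by
    simp only [Multiset.card_cons, adm_cons_cons_sub_left_iff]
  have iff_right : Multiset.card ((a - b) ::ₘ b ::ₘ t) = n ∧ Adm ((a - b) ::ₘ b ::ₘ t) ↔
      Multiset.card (a ::ₘ b ::ₘ t) = n ∧ Adm (a ::ₘ b ::ₘ t) := by
    simp only [Multiset.card_cons, adm_cons_cons_sub_right_iff]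
  unfold symbOrZero
  by_cases h : Multiset.card (a ::ₘ b ::ₘ t) = n ∧ Adm (a ::ₘ b ::ₘ t)
  · rw [dif_pos h, dif_pos (iff_left.2 h), dif_pos (iff_right.2 h)]
    exact symb_blowup t hab _ _ _
  · rw [dif_neg h, dif_neg (mt iff_left.1 h), dif_neg (mt iff_right.1 h), add_zero]

lemma symbOrZero_eq_zero_of_add_eq_zero {n : ℕ} {a b : A} (t : Multiset A) (hb : b ≠ 0)
    (hab : a + b = 0) : symbOrZero n (a ::ₘ b ::ₘ t) = 0 := by
  have h := symbOrZero_blowup (n := n) t hb.symm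
  rwa [sub_zero, zero_sub, neg_eq_of_add_eq_zero_left hab, left_eq_add] at h

lemma symbOrZero_pair_blowup {a b c d : A} (hab : a ≠ b) (hc : b - a = c) (hd : a - b = d) :
    symbOrZero 2 {a, b} = symbOrZero 2 {a, c} + symbOrZero 2 {d, b} :=
  hc ▸ hd ▸ symbOrZero_blowup 0 hab

end Blowup

lemma c5_eq_symbOrZero (a b u v : ZMod 5) (hu : u ∈ ({a, b} : Multiset (ZMod 5)))
    (huv : u * v = 1) : c5 a b u v hu huv = symbOrZero 2 {a, b} :=
  (symbOrZero_eq_symb _).symm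

/-- the invariant `β(M̄₀,₅ ⟲ C₅)`, the sum of the eight
tangent-weight symbols `[1,1]+[1,2]+[1,3]+[2,2]+[2,4]+[3,3]+[3,4]+[4,4]` at the
eight fixed points, vanishes in `𝓑₂(C₅)`. -/
theorem beta_M05_C5_vanishes :
    c5 1 1 1 1 (by decide) (by decide) + c5 1 2 1 1 (by decide) (by decide) +
    c5 1 3 1 1 (by decide) (by decide) + c5 2 2 2 3 (by decide) (by decide) +
    c5 2 4 2 3 (by decide) (by decide) + c5 3 3 3 2 (by decide) (by decide) +
    c5 3 4 3 2 (by decide) (by decide) + c5 4 4 4 4 (by decide) (by decide) = 0 := by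
  simp only [c5_eq_symbOrZero]
  set β : ZMod 5 → ZMod 5 → B (ZMod 5) 2 := fun a b => symbOrZero 2 {a, b}
  have zero14 : β 1 4 = 0 := symbOrZero_eq_zero_of_add_eq_zero 0 (by decide) (by decide)
  have zero32 : β 3 2 = 0 := symbOrZero_eq_zero_of_add_eq_zero 0 (by decide) (by decide)
  have e12 : β 1 2 = β 1 1 + β 4 2 := symbOrZero_pair_blowup (by decide) (by decide) (by decide)
  have e13 : β 1 3 = β 1 2 + β 3 3 := symbOrZero_pair_blowup (by decide) (by decide) (by decide)
  have e14 : β 1 4 = β 1 3 + β 2 4 := symbOrZero_pair_blowup (by decide) (by decide) (by decide)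
  have e24 : β 2 4 = β 2 2 + β 3 4 := symbOrZero_pair_blowup (by decide) (by decide) (by decide)
  have e32 : β 3 2 = β 3 4 + β 1 2 := symbOrZero_pair_blowup (by decide) (by decide) (by decide)
  have e34 : β 3 4 = β 3 1 + β 4 4 := symbOrZero_pair_blowup (by decide) (by decide) (by decide)
  have c42 : β 4 2 = β 2 4 := congrArg (symbOrZero 2) (Multiset.pair_comm 4 2)
  have c31 : β 3 1 = β 1 3 := congrArg (symbOrZero 2) (Multiset.pair_comm 3 1)
  linear_combination (norm := abel)
    zero14 - e14 + zero32 - e32 - e12 - e13 - e24 - e34 - c42 - c31
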